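/- arXiv:1410.4273 — 4 statements merged into one kernel-verified Lean document; each statement's English description precedes it below -/
import Mathlib

section
/- Let λ_1 ≥ ... ≥ λ_n with λ_j < 1 for all j, let λ < λ̂ < λ_n, and suppose (λ̂ − λ)(m − t + Σ_j (1 − λ_j)/(λ_j − λ)) = [Σ_j (1 − λ_j)/((λ_j − λ)(λ_j − λ̂))] / [Σ_j 1/((λ_j − λ)(λ_j − λ̂))] with m − t ≥ 1. Then (λ̂ − λ)·[ (Σ_j (1 − λ_j)/((λ_j − λ)(λ_j − λ̂)²)) / (Σ_j 1/((λ_j − λ)(λ_j − λ̂))) − (λ̂ − λ)·Σ_j (1 − λ_j)/((λ_j − λ)(λ_j − λ̂)) ] > 0. -/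
open Finset

/-!
With `a j = λ_j - λ`, `b j = λ_j - λ̂` and `c j = 1 - λ_j`, all positive, write
`S = ∑ 1/(ab)`, `U = ∑ c/(ab)`, `V = ∑ c/(ab²)` and `W = ∑ c/a`. Cauchy–Schwarz with weights
`c/a` and values `1/b` gives `U² ≤ V W`, and the balance equation says
`(λ̂ - λ) S = U / (m - t + W)`. Hence `(λ̂ - λ) U S = U² / (m - t + W) < V` because `m - t > 0`,
which is the claim `(λ̂ - λ) U < V / S`.
-/

theorem sq_sum_div_mul_le_sum_div_mul_sq_mul_sum_div {ι K : Type*} [Field K] [LinearOrder K]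
    [IsStrictOrderedRing K] (s : Finset ι) (a b c : ι → K) (hca : ∀ i ∈ s, 0 ≤ c i / a i) :
    (∑ i ∈ s, c i / (a i * b i)) ^ 2 ≤
      (∑ i ∈ s, c i / (a i * b i ^ 2)) * ∑ i ∈ s, c i / a i := by
  refine sum_sq_le_sum_mul_sum_of_sq_le_mul s (fun i hi => ?_) hca (fun i _ => le_of_eq ?_)
  · rw [← div_div]
    exact div_nonneg (hca i hi) (sq_nonneg _)
  · ring

theorem mul_div_sub_mul_pos_of_sq_le_mul {d M S U V W : ℝ} (hd : 0 < d) (hM : 0 < M)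
    (hS : 0 < S) (hV : 0 < V) (hUVW : U ^ 2 ≤ V * W) (hbal : d * (M + W) = U / S) :
    0 < d * (V / S - d * U) := by
  have hW : 0 ≤ W := nonneg_of_mul_nonneg_right ((sq_nonneg U).trans hUVW) hV
  have hU : U = d * (M + W) * S := by rw [eq_div_iff hS.ne'] at hbal; linarith
  have hUS : d * U * S < V := by
    have h : d * U * S * (M + W) < V * (M + W) :=
      calc d * U * S * (M + W) = U ^ 2 := by rw [hU]; ring
        _ ≤ V * W := hUVW
        _ < V * (M + W) := by nlinarith
    exact lt_of_mul_lt_mul_right h (by linarith)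
  have : d * U < V / S := (lt_div_iff₀ hS).mpr hUS
  exact mul_pos hd (by linarith)

/-- Inequality (3.2) of Lemma 3.1: the root `λ̂` of the balance equation satisfies
a strict positivity inequality. -/
theorem lambda_hat_inequality
    {n : ℕ} (hn : 0 < n) (lam : Fin n → ℝ) (hmono : Antitone lam)
    (hlam : ∀ j, lam j < 1)
    (l lh : ℝ) (hl : l < lh) (hlh : lh < lam ⟨n - 1, by omega⟩)
    (m t : ℕ) (hmt : t < m)
    (hbal : (lh - l) * (((m : ℝ) - t) + ∑ j, (1 - lam j) / (lam j - l)) =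
      (∑ j, (1 - lam j) / ((lam j - l) * (lam j - lh))) /
        (∑ j, 1 / ((lam j - l) * (lam j - lh)))) :
    0 < (lh - l) *
      ((∑ j, (1 - lam j) / ((lam j - l) * (lam j - lh) ^ 2)) /
          (∑ j, 1 / ((lam j - l) * (lam j - lh))) -
        (lh - l) * ∑ j, (1 - lam j) / ((lam j - l) * (lam j - lh))) := by
  have hb : ∀ j, 0 < lam j - lh := fun j =>
    sub_pos.2 (hlh.trans_le (hmono (Fin.le_iff_val_le_val.2 (Nat.le_sub_one_of_lt j.isLt))))
  have ha : ∀ j, 0 < lam j - l := fun j => by linarith [hb j]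
  have hc : ∀ j, 0 < 1 - lam j := fun j => sub_pos.2 (hlam j)
  have hne : (univ : Finset (Fin n)).Nonempty := ⟨⟨0, hn⟩, mem_univ _⟩
  have hM : (0 : ℝ) < m - t := sub_pos.2 (by exact_mod_cast hmt)
  refine mul_div_sub_mul_pos_of_sq_le_mul (sub_pos.2 hl) hM ?_ ?_
    (sq_sum_div_mul_le_sum_div_mul_sq_mul_sum_div _ _ _ _ fun j _ => (div_pos (hc j) (ha j)).le)
    hbal
  · exact sum_pos (fun j _ => div_pos one_pos (mul_pos (ha j) (hb j))) hne
  · exact sum_pos (fun j _ => div_pos (hc j) (mul_pos (ha j) (pow_pos (hb j) 2))) hne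
end

section
/- Let m, ℓ, n be positive reals with m ≥ ℓ > n. Define F(T̂) = ℓ(1 − n/T̂)/(m − (ℓ−1)/2 + T̂ − n) − n/T̂ on T̂ ∈ (n, ∞). Then F attains its global maximum on (n, ∞) at T̂* = [n(m + (ℓ+1)/2 − n) + √(n ℓ (m − (ℓ−1)/2)(m + (ℓ+1)/2 − n))]/(ℓ − n). -/
/-!
Over a common denominator, `F(T) = ((ℓ - n) T - n A) / (T (T + D))` with
`A = m + (ℓ + 1)/2 - n` and `D = m - (ℓ - 1)/2 - n`. For a function `(c x - a) / (x (x + d))`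
and any `t` with `c t² = 2 a t + a d` one has the identity
`(c t - a) x (x + d) - (c x - a) t (t + d) = (x - t)² (c t - a)`,
so the larger root `t = (a + √(a² + c a d)) / c` of that quadratic is a global maximum wherever
`x (x + d) > 0`. With `a = n A`, `c = ℓ - n`, `d = D` the discriminant `a² + c a d` equals
`n ℓ (m - (ℓ - 1)/2) A`, and this root is `T̂*`.
-/

open Real

lemma mul_sub_div_eq {ℓ n d x : ℝ} (hx : x ≠ 0) (hxd : x + d ≠ 0) :
    ℓ * (1 - n / x) / (x + d) - n / x = ((ℓ - n) * x - n * (ℓ + d)) / (x * (x + d)) := by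
  field_simp
  ring

section LinearOverQuadratic

variable {a c d t : ℝ}

lemma div_mul_add_le_of_sq_eq {x : ℝ} (ht : 0 < t * (t + d)) (hx : 0 < x * (x + d))
    (hcrit : c * t ^ 2 = 2 * a * t + a * d) (hat : a ≤ c * t) :
    (c * x - a) / (x * (x + d)) ≤ (c * t - a) / (t * (t + d)) := by
  rw [div_le_div_iff₀ hx ht]
  have hdiff : (c * t - a) * (x * (x + d)) - (c * x - a) * (t * (t + d))
      = (x - t) ^ 2 * (c * t - a) := by linear_combination (x - t) * hcrit
  nlinarith [mul_nonneg (sq_nonneg (x - t)) (sub_nonneg.2 hat)]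

lemma lt_of_sq_lt_of_sq_eq {x : ℝ} (hc : 0 < c) (hcrit : c * t ^ 2 = 2 * a * t + a * d)
    (hat : a ≤ c * t) (hx : c * x ^ 2 < 2 * a * x + a * d) : x < t := by
  by_contra! hle
  -- `q(t) - q(x) = (t - x) (c t + c x - 2 a)` for `q(y) = c y² - 2 a y - a d`
  nlinarith [mul_nonneg (sub_nonneg.2 hle) (by nlinarith : 0 ≤ c * t + c * x - 2 * a)]

lemma sq_eq_of_eq_add_sqrt_div (hc : 0 < c) (hdisc : 0 ≤ a ^ 2 + c * a * d) :
    c * ((a + √(a ^ 2 + c * a * d)) / c) ^ 2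
      = 2 * a * ((a + √(a ^ 2 + c * a * d)) / c) + a * d := by
  have hs := sq_sqrt hdisc
  generalize √(a ^ 2 + c * a * d) = s at hs ⊢
  field_simp
  linear_combination hs

lemma le_mul_add_sqrt_div (hc : 0 < c) : a ≤ c * ((a + √(a ^ 2 + c * a * d)) / c) := by
  rw [mul_div_cancel₀ _ hc.ne']
  linarith [sqrt_nonneg (a ^ 2 + c * a * d)]

end LinearOverQuadratic

/-- Lemma 3.5: `F(T̂)` attains its global maximum on `(n, ∞)` at `T̂*`. -/
theorem F_isMaxOn
    (m ℓ n : ℝ) (hml : ℓ ≤ m) (hln : n < ℓ) (hn : 0 < n) :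
    (n * (m + (ℓ + 1) / 2 - n) +
        Real.sqrt (n * ℓ * (m - (ℓ - 1) / 2) * (m + (ℓ + 1) / 2 - n))) / (ℓ - n) ∈
      Set.Ioi n ∧
    IsMaxOn (fun Th => ℓ * (1 - n / Th) / (m - (ℓ - 1) / 2 + Th - n) - n / Th)
      (Set.Ioi n)
      ((n * (m + (ℓ + 1) / 2 - n) +
        Real.sqrt (n * ℓ * (m - (ℓ - 1) / 2) * (m + (ℓ + 1) / 2 - n))) / (ℓ - n)) := by
  have hc : 0 < ℓ - n := by linarith
  have hF : ∀ x, n < x → ℓ * (1 - n / x) / (m - (ℓ - 1) / 2 + x - n) - n / x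
      = ((ℓ - n) * x - n * (m + (ℓ + 1) / 2 - n)) / (x * (x + (m - (ℓ - 1) / 2 - n))) := by
    intro x hx
    rw [show m - (ℓ - 1) / 2 + x - n = x + (m - (ℓ - 1) / 2 - n) by ring,
      mul_sub_div_eq (by linarith) (by linarith)]
    ring_nf
  have hdisc : 0 ≤ n * ℓ * (m - (ℓ - 1) / 2) * (m + (ℓ + 1) / 2 - n) := by
    have : 0 < m - (ℓ - 1) / 2 := by linarith
    have : 0 < m + (ℓ + 1) / 2 - n := by linarith
    have : 0 < ℓ := hn.trans hln
    positivity
  rw [show n * ℓ * (m - (ℓ - 1) / 2) * (m + (ℓ + 1) / 2 - n) = (n * (m + (ℓ + 1) / 2 - n)) ^ 2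
      + (ℓ - n) * (n * (m + (ℓ + 1) / 2 - n)) * (m - (ℓ - 1) / 2 - n) by ring] at hdisc ⊢
  have hA : ℓ - n < m + (ℓ + 1) / 2 - n := by linarith
  have hDn : 0 < m - (ℓ - 1) / 2 - n + n := by linarith
  generalize m + (ℓ + 1) / 2 - n = A at hA hF hdisc ⊢
  generalize m - (ℓ - 1) / 2 - n = D at hDn hF hdisc ⊢
  have hcrit := sq_eq_of_eq_add_sqrt_div hc hdisc
  have hat := le_mul_add_sqrt_div (a := n * A) (d := D) hc
  generalize (n * A + √((n * A) ^ 2 + (ℓ - n) * (n * A) * D)) / (ℓ - n) = t at hcrit hat ⊢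
  have hnt : n < t := lt_of_sq_lt_of_sq_eq hc hcrit hat <| by
    nlinarith [mul_pos hn (mul_pos (hc.trans hA) hDn), mul_pos (mul_pos hn hn) (sub_pos.2 hA)]
  refine ⟨hnt, isMaxOn_iff.2 fun x (hx : n < x) => ?_⟩
  rw [hF x hx, hF t hnt]
  exact div_mul_add_le_of_sq_eq (by nlinarith) (by nlinarith) hcrit hat
end

section
/- Let V₁ᵀ ∈ ℝ^{n×m} and a column selection giving V₁ᵀΠ whose chosen submatrix V₁ ∈ ℝ^{n×ℓ} has CS decomposition V₁ = P₁(C 0)Q₁ᵀ as a block of an m×m orthogonal matrix, with nonnegative diagonal C satisfying C² + S² = I. Suppose there exist nonnegative weights s_i, at most ℓ nonzero and supported on the selected columns, such that λ_min(Σᵢ sᵢ vᵢ¹(vᵢ¹)ᵀ) ≥ (1 − √(n/ℓ))² and λ_max(Σᵢ sᵢ vᵢ²(vᵢ²)ᵀ) ≤ (1 + √((m−n)/ℓ))². Then σ_min²(V₁) ≥ (√ℓ − √n)² / [ (√ℓ + √(m−n))² + (√ℓ − √n)² ]. -/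
open Matrix Finset

/-!
Let `A` and `B` be the top `n` and bottom `m - n` rows of the columns of `W` selected by `S`, so
that `AᵀA + BᵀB = 1`, and let `D = diag s`, so that `α ≤ A D Aᵀ` and `B D Bᵀ ≤ β`. If
`A Aᵀ u = μ u` with `uᵀu = 1`, then `t = Aᵀ u` satisfies `BᵀB t = (1 - μ) t`, `tᵀt = μ` and
`(B t)ᵀ(B t) = (1 - μ) μ`. Testing the lower bound on `u` and the upper bound on `B t` gives
`α ≤ tᵀ D t` and `(1 - μ)² tᵀ D t ≤ β (1 - μ) μ`, hence `(1 - μ) α ≤ β μ`, i.e.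
`μ ≥ α / (α + β)`; with `α = (1 - √(n/ℓ))²` and `β = (1 + √((m-n)/ℓ))²` this is the claimed
constant once `ℓ` is cleared.
-/

namespace Matrix

variable {ι κ R : Type*}

theorem sum_smul_vecMulVec_transpose [Fintype ι] [CommSemiring R] [DecidableEq ι]
    (A : Matrix κ ι R) (s : ι → R) :
    ∑ i, s i • vecMulVec (Aᵀ i) (Aᵀ i) = A * diagonal s * Aᵀ := by
  ext j k
  simp only [sum_apply, smul_apply, vecMulVec_apply, transpose_apply, mul_apply,
    diagonal_apply, mul_ite, mul_zero, Finset.sum_ite_eq', Finset.mem_univ, if_true, smul_eq_mul]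
  exact Finset.sum_congr rfl fun i _ ↦ by ring

theorem sum_vecMulVec_transpose [Fintype ι] [CommSemiring R] (A : Matrix κ ι R) :
    ∑ i, vecMulVec (Aᵀ i) (Aᵀ i) = A * Aᵀ := by
  classical
  simpa using sum_smul_vecMulVec_transpose A 1

theorem sum_smul_vecMulVec_transpose_of_support [Fintype ι] [CommSemiring R] [DecidableEq ι]
    (A : Matrix κ ι R) {S : Finset ι} {s : ι → R} (hs : ∀ i ∉ S, s i = 0) :
    ∑ i, s i • vecMulVec (Aᵀ i) (Aᵀ i) =
      A.submatrix id ((↑) : S → ι) * diagonal (fun i : S ↦ s i) * (A.submatrix id (↑))ᵀ := by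
  rw [← Finset.sum_subset (subset_univ S) fun i _ hi ↦ by rw [hs i hi, zero_smul],
    ← Finset.sum_coe_sort]
  exact sum_smul_vecMulVec_transpose (A.submatrix id ((↑) : S → ι)) _

theorem finset_sum_vecMulVec_transpose [CommSemiring R] (A : Matrix κ ι R) (S : Finset ι) :
    ∑ i ∈ S, vecMulVec (Aᵀ i) (Aᵀ i) =
      A.submatrix id ((↑) : S → ι) * (A.submatrix id (↑))ᵀ := by
  rw [← Finset.sum_coe_sort]
  exact sum_vecMulVec_transpose (A.submatrix id ((↑) : S → ι))

theorem dotProduct_mul_mul_transpose_mulVec [Fintype ι] [Fintype κ] [CommSemiring R]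
    (C : Matrix κ ι R) (D : Matrix ι ι R) (x : κ → R) :
    x ⬝ᵥ (C * D * Cᵀ) *ᵥ x = (Cᵀ *ᵥ x) ⬝ᵥ D *ᵥ (Cᵀ *ᵥ x) := by
  rw [← mulVec_mulVec, ← mulVec_mulVec, dotProduct_mulVec, mulVec_transpose]

theorem transpose_mul_self_submatrix [NonUnitalNonAssocSemiring R] {ι' : Type*} [Fintype ι']
    (A : Matrix ι' ι R) (e : κ → ι) :
    (A.submatrix id e)ᵀ * A.submatrix id e = (Aᵀ * A).submatrix e e := by
  rw [submatrix_mul _ _ _ id _ Function.bijective_id]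
  rfl

theorem transpose_mul_self_eq_top_add_bottom [NonUnitalNonAssocSemiring R] {m n : ℕ}
    (h : n ≤ m) (V : Matrix (Fin m) ι R) :
    Vᵀ * V = (V.submatrix (Fin.castLE h) id)ᵀ * V.submatrix (Fin.castLE h) id +
      (V.submatrix (fun j : Fin (m - n) ↦ ⟨n + j, by omega⟩) id)ᵀ *
        V.submatrix (fun j : Fin (m - n) ↦ ⟨n + j, by omega⟩) id := by
  ext i i'
  rw [add_apply, mul_apply, mul_apply, mul_apply,
    ← Equiv.sum_comp (finCongr (Nat.add_sub_of_le h)), Fin.sum_univ_add]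
  rfl

theorem posSemidef_sub_smul_one_of_forall_eigen [Fintype κ] [DecidableEq κ]
    {M : Matrix κ κ ℝ} (hM : M.IsHermitian) {c : ℝ}
    (h : ∀ (u : κ → ℝ) (μ : ℝ), u ⬝ᵥ u = 1 → M *ᵥ u = μ • u → c ≤ μ) :
    (M - c • 1).PosSemidef := by
  have hN : (M - c • 1).IsHermitian := hM.sub (isHermitian_one.smul (IsSelfAdjoint.all c))
  refine hN.posSemidef_iff_eigenvalues_nonneg.mpr fun i ↦ ?_
  set u := hN.eigenvectorBasis i
  have hunit : u ⬝ᵥ u = 1 := by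
    have := real_inner_self_eq_norm_sq u
    rwa [hN.eigenvectorBasis.orthonormal.1 i, EuclideanSpace.inner_eq_star_dotProduct,
      star_trivial, one_pow] at this
  have heigen : M *ᵥ u = (hN.eigenvalues i + c) • u := by
    have := hN.mulVec_eigenvectorBasis i
    rw [sub_mulVec, smul_mulVec, one_mulVec] at this
    rw [add_smul, ← this, sub_add_cancel]
  simpa using h u _ hunit heigen

section DualSet

variable {κ' : Type*} [Fintype ι] [Fintype κ] [Fintype κ'] [DecidableEq ι]
  {A : Matrix κ ι ℝ} {B : Matrix κ' ι ℝ}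

theorem transpose_mul_self_mulVec_eq_smul (hAB : Aᵀ * A + Bᵀ * B = 1) {u : κ → ℝ} {μ : ℝ}
    (hu : (A * Aᵀ) *ᵥ u = μ • u) : (Bᵀ * B) *ᵥ (Aᵀ *ᵥ u) = (1 - μ) • (Aᵀ *ᵥ u) := by
  rw [eq_sub_of_add_eq' hAB, sub_mulVec, one_mulVec, ← mulVec_mulVec, mulVec_mulVec u A Aᵀ,
    hu, mulVec_smul, sub_smul, one_smul]

variable [DecidableEq κ] [DecidableEq κ'] (hAB : Aᵀ * A + Bᵀ * B = 1) (s : ι → ℝ) {α β : ℝ}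
  (hα : 0 ≤ α) (hβ : 0 ≤ β) (hlow : (A * diagonal s * Aᵀ - α • 1).PosSemidef)
  (hup : (β • 1 - B * diagonal s * Bᵀ).PosSemidef)
include hAB hα hβ hlow hup

theorem div_add_le_of_mulVec_eq_smul {u : κ → ℝ} {μ : ℝ} (hunit : u ⬝ᵥ u = 1)
    (hu : (A * Aᵀ) *ᵥ u = μ • u) : α / (α + β) ≤ μ := by
  set t := Aᵀ *ᵥ u
  set y := B *ᵥ t
  set Q := t ⬝ᵥ diagonal s *ᵥ t
  have hBy : Bᵀ *ᵥ y = (1 - μ) • t := by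
    rw [mulVec_mulVec]
    exact transpose_mul_self_mulVec_eq_smul hAB hu
  have htt : t ⬝ᵥ t = μ := by
    have := dotProduct_mul_mul_transpose_mulVec A 1 u
    rwa [Matrix.mul_one, one_mulVec, hu, dotProduct_smul, hunit, smul_eq_mul, mul_one,
      eq_comm] at this
  have hyy : y ⬝ᵥ y = (1 - μ) * μ := by
    have := dotProduct_mul_mul_transpose_mulVec Bᵀ 1 t
    rw [Matrix.mul_one, transpose_transpose, one_mulVec, ← mulVec_mulVec] at this
    rw [← this, hBy, dotProduct_smul, htt, smul_eq_mul]
  have hQ : α ≤ Q := by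
    have := hlow.dotProduct_mulVec_nonneg u
    rw [star_trivial, sub_mulVec, dotProduct_sub, dotProduct_mul_mul_transpose_mulVec,
      smul_mulVec, one_mulVec, dotProduct_smul, hunit, smul_eq_mul, mul_one] at this
    linarith
  have hQy : (1 - μ) ^ 2 * Q ≤ β * ((1 - μ) * μ) := by
    have := hup.dotProduct_mulVec_nonneg y
    rw [star_trivial, sub_mulVec, dotProduct_sub, dotProduct_mul_mul_transpose_mulVec,
      smul_mulVec, one_mulVec, dotProduct_smul, hyy, hBy, mulVec_smul, dotProduct_smul,
      smul_dotProduct, smul_eq_mul, smul_eq_mul, smul_eq_mul] at this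
    nlinarith
  have hμ : 0 ≤ μ := htt ▸ dotProduct_self_star_nonneg t
  refine div_le_of_le_mul₀ (by positivity) hμ ?_
  rcases lt_or_ge μ 1 with hμ1 | hμ1
  · have hQμ : (1 - μ) * Q ≤ β * μ := by
      refine le_of_mul_le_mul_left ?_ (sub_pos.mpr hμ1)
      linarith
    nlinarith
  · nlinarith

theorem posSemidef_mul_transpose_sub_smul_one : (A * Aᵀ - (α / (α + β)) • 1).PosSemidef :=
  posSemidef_sub_smul_one_of_forall_eigen (by simpa using isHermitian_mul_conjTranspose_self A)
    fun _ _ hunit hu ↦ div_add_le_of_mulVec_eq_smul hAB s hα hβ hlow hup hunit hu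

end DualSet

end Matrix

theorem sq_sub_sqrt_div_eq {ℓ a b : ℝ} (hℓ : 0 < ℓ) :
    (√ℓ - √a) ^ 2 / ((√ℓ + √b) ^ 2 + (√ℓ - √a) ^ 2) =
      (1 - √(a / ℓ)) ^ 2 / ((1 - √(a / ℓ)) ^ 2 + (1 + √(b / ℓ)) ^ 2) := by
  have : 0 < √ℓ := Real.sqrt_pos.mpr hℓ
  rw [Real.sqrt_div' _ hℓ.le, Real.sqrt_div' _ hℓ.le]
  field_simp
  ring

/-- Theorem 4.1: if dual-set weights exist with the lower bound
`λ_min(Σᵢ sᵢ vᵢ¹(vᵢ¹)ᵀ) ≥ (1-√(n/ℓ))²` and the upper bound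
`λ_max(Σᵢ sᵢ vᵢ²(vᵢ²)ᵀ) ≤ (1+√((m-n)/ℓ))²`, then the selected `n×ℓ` submatrix `V₁`
of `V₁ᵀ` satisfies
`σ_min²(V₁) ≥ (√ℓ-√n)²/((√ℓ+√(m-n))² + (√ℓ-√n)²)`, expressed as positive
semidefiniteness of `V₁V₁ᵀ - c·I = Σ_{i∈S} vᵢ¹(vᵢ¹)ᵀ - c·I`. -/
theorem ddsss_sigma_min_bound
    {m n ℓ : ℕ} (hnm : n ≤ m) (hnl : n < ℓ)
    (W : Matrix (Fin m) (Fin m) ℝ) (hW : Wᵀ * W = 1)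
    (S : Finset (Fin m))
    (s : Fin m → ℝ) (hsupp : ∀ i ∉ S, s i = 0)
    (hlow : ((∑ i, s i • vecMulVec (fun j : Fin n => W (Fin.castLE hnm j) i)
          (fun j : Fin n => W (Fin.castLE hnm j) i)) -
        ((1 - Real.sqrt ((n : ℝ) / ℓ)) ^ 2) •
          (1 : Matrix (Fin n) (Fin n) ℝ)).PosSemidef)
    (hup : (((1 + Real.sqrt (((m : ℝ) - n) / ℓ)) ^ 2) •
          (1 : Matrix (Fin (m - n)) (Fin (m - n)) ℝ) -
        ∑ i, s i • vecMulVec (fun j : Fin (m - n) => W ⟨n + (j : ℕ), by omega⟩ i)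
          (fun j : Fin (m - n) => W ⟨n + (j : ℕ), by omega⟩ i)).PosSemidef) :
    ((∑ i ∈ S, vecMulVec (fun j : Fin n => W (Fin.castLE hnm j) i)
        (fun j : Fin n => W (Fin.castLE hnm j) i)) -
      ((Real.sqrt ℓ - Real.sqrt n) ^ 2 /
          ((Real.sqrt ℓ + Real.sqrt ((m : ℝ) - n)) ^ 2 +
            (Real.sqrt ℓ - Real.sqrt n) ^ 2)) •
        (1 : Matrix (Fin n) (Fin n) ℝ)).PosSemidef := by
  have hℓ : (0 : ℝ) < ℓ := by exact_mod_cast Nat.zero_lt_of_lt hnl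
  set A := W.submatrix (Fin.castLE hnm) id
  set B := W.submatrix (fun j : Fin (m - n) ↦ (⟨n + j, by omega⟩ : Fin m)) id
  have hAB : (A.submatrix id ((↑) : S → Fin m))ᵀ * A.submatrix id ((↑) : S → Fin m) +
      (B.submatrix id ((↑) : S → Fin m))ᵀ * B.submatrix id ((↑) : S → Fin m) = 1 := by
    rw [transpose_mul_self_submatrix, transpose_mul_self_submatrix,
      ← submatrix_one _ Subtype.val_injective, ← hW, transpose_mul_self_eq_top_add_bottom hnm W]
    rfl
  have key := posSemidef_mul_transpose_sub_smul_one hAB (fun i : S ↦ s i)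
    (sq_nonneg _) (sq_nonneg _)
    (by convert hlow using 2; exact (sum_smul_vecMulVec_transpose_of_support A hsupp).symm)
    (by convert hup using 2; exact (sum_smul_vecMulVec_transpose_of_support B hsupp).symm)
  rw [sq_sub_sqrt_div_eq hℓ]
  convert key using 2
  exact finset_sum_vecMulVec_transpose A S
end

section
/- Let λ ≤ λ̂ < λ_n ≤ λ_j ≤ 1 for j = 1,...,n with T = Σ_j 1/(λ_j − λ). If λ̂ satisfies (λ̂ − λ)(m − t + (1−λ)T − n) = 1 − λ − [Σ_j 1/(λ_j − λ̂)] / [Σ_j 1/((λ_j − λ)(λ_j − λ̂))], then λ̂ − λ ≥ (1 − λ − n/T)/(m − t + (1−λ)T − n). -/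
/-! Since the denominator `D` is positive, the equation gives `(λ̂ - λ) D = 1 - λ - S / S'` with
`S = Σ 1/(λⱼ - λ̂)` and `S' = Σ 1/((λⱼ - λ)(λⱼ - λ̂))`, so it suffices that `S T ≤ n S'`. This is
Chebyshev's sum inequality: `1/(λⱼ - λ)` and `1/(λⱼ - λ̂)` are both decreasing in `λⱼ`, hence
monovary. -/

open Finset

section Chebyshev

variable {ι α : Type*} [Field α] [LinearOrder α] [IsStrictOrderedRing α]

theorem MonovaryOn.sum_div_sum_mul_le_card_div_sum {s : Finset ι} {f g : ι → α}
    (hfg : MonovaryOn f g s) (hf : ∀ i ∈ s, 0 < f i) (hg : ∀ i ∈ s, 0 < g i) :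
    (∑ i ∈ s, g i) / ∑ i ∈ s, f i * g i ≤ #s / ∑ i ∈ s, f i := by
  rcases s.eq_empty_or_nonempty with rfl | hs
  · simp
  have hfg_pos : 0 < ∑ i ∈ s, f i * g i :=
    sum_pos (fun i hi => mul_pos (hf i hi) (hg i hi)) hs
  rw [div_le_div_iff₀ hfg_pos (sum_pos hf hs), mul_comm]
  exact hfg.sum_mul_sum_le_card_mul_sum

theorem monovary_one_div_sub_one_div_sub {x : ι → α} {a b : α} (hab : a ≤ b)
    (hx : ∀ i, b < x i) : Monovary (fun i => 1 / (x i - a)) (fun i => 1 / (x i - b)) := by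
  intro i j hij
  have hji : x j < x i := by
    by_contra! h
    exact hij.not_ge (one_div_le_one_div_of_le (sub_pos.2 (hx i)) (by linarith))
  exact one_div_le_one_div_of_le (by linarith [hx j]) (by linarith)

end Chebyshev

theorem lambda_hat_step_lower_bound_general
    {n : ℕ} (lam : Fin n → ℝ) (lamn : ℝ)
    (hmin : ∀ j, lamn ≤ lam j)
    (l lh T : ℝ) (hllh : l ≤ lh) (hlh : lh < lamn)
    (hT : T = ∑ j, 1 / (lam j - l))
    (m t : ℕ)
    (hpos : 0 < (m : ℝ) - t + (1 - l) * T - n)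
    (heq : (lh - l) * ((m : ℝ) - t + (1 - l) * T - n) =
      1 - l - (∑ j, 1 / (lam j - lh)) /
        (∑ j, 1 / ((lam j - l) * (lam j - lh)))) :
    lh - l ≥ (1 - l - (n : ℝ) / T) / ((m : ℝ) - t + (1 - l) * T - n) := by
  have hgap : ∀ j, lh < lam j := fun j => hlh.trans_le (hmin j)
  have hratio : (∑ j, 1 / (lam j - lh)) / (∑ j, 1 / ((lam j - l) * (lam j - lh))) ≤ n / T := by
    have hmono := (monovary_one_div_sub_one_div_sub hllh hgap).monovaryOn (univ : Finset (Fin n))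
    have := hmono.sum_div_sum_mul_le_card_div_sum
      (fun j _ => one_div_pos.2 (by linarith [hgap j]))
      (fun j _ => one_div_pos.2 (sub_pos.2 (hgap j)))
    simpa only [one_div_mul_one_div, card_univ, Fintype.card_fin, ← hT] using this
  rw [ge_iff_le, div_le_iff₀ hpos, heq]
  linarith

/-- Step inequality in Lemma 3.3: the balance equation implies
`λ̂ - λ ≥ (1 - λ - n/T)/(m - t + (1-λ)T - n)`. -/
theorem lambda_hat_step_lower_bound
    {n : ℕ} (hn : 0 < n) (lam : Fin n → ℝ) (lamn : ℝ)
    (hmin : ∀ j, lamn ≤ lam j) (hle1 : ∀ j, lam j ≤ 1)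
    (l lh T : ℝ) (hllh : l ≤ lh) (hlh : lh < lamn)
    (hT : T = ∑ j, 1 / (lam j - l))
    (m t : ℕ)
    (hpos : 0 < (m : ℝ) - t + (1 - l) * T - n)
    (heq : (lh - l) * ((m : ℝ) - t + (1 - l) * T - n) =
      1 - l - (∑ j, 1 / (lam j - lh)) /
        (∑ j, 1 / ((lam j - l) * (lam j - lh)))) :
    lh - l ≥ (1 - l - (n : ℝ) / T) / ((m : ℝ) - t + (1 - l) * T - n) :=
  lambda_hat_step_lower_bound_general lam lamn hmin l lh T hllh hlh hT m t hpos heq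
end
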